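/- arXiv:2412.00494 — 8 statements merged into one kernel-verified Lean document; each statement's English description precedes it below -/
import Mathlib

section
/- Let X and Y be real Banach spaces with X reflexive, let X_n be a finite-dimensional subspace of X and P_n : X → X a continuous linear projection with range X_n. Let Ψ : X → X' satisfy ⟨Ψ(x), x⟩ > 0 for all x ≠ 0 and ⟨Ψ(z), x − P_n x⟩ = 0 for all z ∈ X_n and x ∈ X. Let S : X' → Y be a continuous linear map, A : X → Y' a map, b ∈ Y', and r > 0 such that ⟨A(x) − b, S(Ψ(x))⟩ ≥ 0 for every x ∈ X with ‖x‖_X ≥ r. Define R_n(x) := P_n(J⁻¹(S*(A(x) − b))), where J : X → X'' is the canonical embedding (an isomorphism by reflexivity) and S* : Y' → X'' is the adjoint of S. Then every solution x ∈ X_n of R_n(x) = λ x with λ < 0 satisfies ‖x‖_X < r. -/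
open NormedSpace

/-- Boundedness of negative eigen-solutions of the discrete nonlinear
eigenvalue problem `R_n(x) = λ x`, where `R_n(x) = P_n (J⁻¹ (S* (A x − b)))`. -/
theorem eigen_solution_bound
    {X Y : Type*}
    [NormedAddCommGroup X] [NormedSpace ℝ X] [CompleteSpace X]
    [NormedAddCommGroup Y] [NormedSpace ℝ Y] [CompleteSpace Y]
    -- X is reflexive
    (hrefl : Function.Surjective (inclusionInDoubleDual ℝ X))
    -- a finite-dimensional subspace with a continuous linear projection onto it
    (W : Submodule ℝ X) (hfin : FiniteDimensional ℝ W)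
    (P : X →L[ℝ] X) (hPrange : LinearMap.range (P : X →ₗ[ℝ] X) = W) (hPproj : ∀ x ∈ W, P x = x)
    -- Ψ satisfies (Ψ2) and (Ψ3) relative to P
    (Ψ : X → StrongDual ℝ X)
    (hΨpos : ∀ x : X, x ≠ 0 → 0 < Ψ x x)
    (hΨproj : ∀ z ∈ W, ∀ x : X, Ψ z (x - P x) = 0)
    (S : StrongDual ℝ X →L[ℝ] Y)
    (A : X → StrongDual ℝ Y) (b : StrongDual ℝ Y)
    (r : ℝ) (hr : 0 < r)
    (hpos : ∀ x : X, r ≤ ‖x‖ → 0 ≤ (A x - b) (S (Ψ x)))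
    -- an eigen-solution of `R_n(x) = λ x` with negative eigenvalue:
    (x : X) (hx : x ∈ W) (lam : ℝ) (hlam : lam < 0)
    (z : X) (hz : inclusionInDoubleDual ℝ X z = (A x - b).comp S)
    (heig : P z = lam • x) :
    ‖x‖ < r := by
  rcases eq_or_ne x 0 with rfl | hx0
  · simpa using hr
  by_contra h
  push_neg at h
  have h1 : 0 ≤ (A x - b) (S (Ψ x)) := hpos x h
  have h2 : Ψ x z = (A x - b) (S (Ψ x)) := by
    have := congrArg (fun f => f (Ψ x)) hz
    simpa [dual_def] using this
  have h3 : Ψ x (z - P z) = 0 := hΨproj x hx z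
  have h4 : Ψ x z = lam * Ψ x x := by
    have : Ψ x z - Ψ x (P z) = 0 := by simpa [map_sub] using h3
    have h5 : Ψ x z = Ψ x (P z) := by linarith
    rw [h5, heig, map_smul, smul_eq_mul]
  have hpsi := hΨpos x hx0
  nlinarith [h1, h2.symm.trans h4]
end

section
/- Let X and Y be real Banach spaces with X reflexive, let X_n be a finite-dimensional subspace of X and P_n : X → X a continuous linear projection with range X_n. Let S : X' → Y be a continuous linear map, A : X → Y' a map and b ∈ Y'. Define R_n(x) := P_n(J⁻¹(S*(A(x) − b))), where J : X → X'' is the canonical embedding and S* : Y' → X'' the adjoint of S, and set Y_n := { S(P_n* x') : x' ∈ X' } ⊆ Y, where P_n* : X' → X' is the adjoint of P_n. Then for x ∈ X_n the following are equivalent: (i) ⟨A(x) − b, y⟩ = 0 for all y ∈ Y_n; (ii) R_n(x) = 0. -/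
open NormedSpace

/-- For `x ∈ X_n`, the discrete equation `⟨A(x) − b, y⟩ = 0` for all
`y ∈ Y_n := S(P_n*(X'))` is equivalent to `R_n(x) = 0`,
where `R_n(x) = P_n (J⁻¹ (S* (A x − b)))`. -/
theorem discrete_equation_iff_Rn_eq_zero
    {X Y : Type*}
    [NormedAddCommGroup X] [NormedSpace ℝ X] [CompleteSpace X]
    [NormedAddCommGroup Y] [NormedSpace ℝ Y] [CompleteSpace Y]
    -- X is reflexive
    (hrefl : Function.Surjective (inclusionInDoubleDual ℝ X))
    -- a finite-dimensional subspace with a continuous linear projection onto it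
    (W : Submodule ℝ X) (hfin : FiniteDimensional ℝ W)
    (P : X →L[ℝ] X) (hPrange : LinearMap.range (P : X →ₗ[ℝ] X) = W) (hPproj : ∀ x ∈ W, P x = x)
    (S : StrongDual ℝ X →L[ℝ] Y)
    (A : X → StrongDual ℝ Y) (b : StrongDual ℝ Y)
    -- Y_n is the image of X' under S ∘ P*
    (Yn : Set Y) (hYn : Yn = {y : Y | ∃ f : StrongDual ℝ X, y = S (f.comp P)})
    (x : X) (hx : x ∈ W)
    -- z = J⁻¹ (S* (A x − b)), i.e. J z = S* (A x − b)
    (z : X) (hz : inclusionInDoubleDual ℝ X z = (A x - b).comp S) :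
    (∀ y ∈ Yn, (A x - b) y = 0) ↔ P z = 0 := by
  have key : ∀ f : StrongDual ℝ X, (A x - b) (S (f.comp P)) = f (P z) := by
    intro f
    have := congrArg (fun g => g (f.comp P)) hz
    simpa [inclusionInDoubleDual, inclusionInDoubleDualLi] using this.symm
  subst hYn
  constructor
  · intro h
    apply NormedSpace.eq_zero_of_forall_dual_eq_zero ℝ
    intro f
    have := h (S (f.comp P)) ⟨f, rfl⟩
    rw [key f] at this
    exact this
  · rintro hPz y ⟨f, rfl⟩
    rw [key f, hPz, map_zero]
end

section
/- Let V and Q be real Hilbert spaces, X := V × Q, and let L ∈ L(V,V') and B ∈ L(V,Q') satisfy (A1) with constants α > 0 and c_L, and (A2) with Θ ∈ L(Q,V) and constant c_Θ. Let A : X → X' be the linear saddle-point operator A(u,p) := (Lu − B*p, Bu). Then for every τ with 0 < τ ≤ α/(c_Θ² c_L²), the map Φ : X → X, Φ(u,p) := (u − τ Θp, p), is a surjective continuous linear map and ⟨A(u,p), Φ(u,p)⟩ ≥ (α/2)‖u‖_V² + (τ/2)‖p‖_Q² for all (u,p) ∈ X; in particular, A is linearly mapped coercive. -/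
open NormedSpace

/-- Linearly mapped coercivity of the linear saddle-point operator
`A(u,p) = (Lu − B*p, Bu)` under (A1) and (A2), via `Φ(u,p) = (u − τΘp, p)`. -/
theorem saddle_point_linearly_mapped_coercive
    {V Q : Type*}
    [NormedAddCommGroup V] [InnerProductSpace ℝ V] [CompleteSpace V]
    [NormedAddCommGroup Q] [InnerProductSpace ℝ Q] [CompleteSpace Q]
    -- (A1): L is coercive with constant α and bounded with constant c_L
    (L : V →L[ℝ] StrongDual ℝ V) (α : ℝ) (hα : 0 < α)
    (hL : ∀ u : V, α * ‖u‖ ^ 2 ≤ L u u)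
    (cL : ℝ) (hcL : ∀ u : V, ‖L u‖ ≤ cL * ‖u‖)
    -- (A2): Θ ∈ L(Q,V) is onto, ⟨B*p, Θp⟩ ≥ ‖p‖², with continuity constant c_Θ
    (B : V →L[ℝ] StrongDual ℝ Q)
    (Θ : Q →L[ℝ] V) (hΘsurj : Function.Surjective Θ)
    (hΘ : ∀ p : Q, ‖p‖ ^ 2 ≤ B (Θ p) p)
    (cΘ : ℝ) (hcΘ : ∀ p : Q, ‖Θ p‖ ≤ cΘ * ‖p‖)
    -- the saddle-point operator A(u,p) = (Lu − B*p, Bu), with ⟨B*p, v⟩ = ⟨Bv, p⟩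
    (A : V × Q → StrongDual ℝ V × StrongDual ℝ Q)
    (hA1 : ∀ (u : V) (p : Q) (v : V), (A (u, p)).1 v = L u v - B v p)
    (hA2 : ∀ (u : V) (p : Q), (A (u, p)).2 = B u)
    (τ : ℝ) (hτ0 : 0 < τ) (hτ : τ ≤ α / (cΘ ^ 2 * cL ^ 2))
    -- Φ is the continuous linear map Φ(u,p) = (u − τΘp, p)
    (Φ : V × Q →L[ℝ] V × Q)
    (hΦ : ∀ (u : V) (p : Q), Φ (u, p) = (u - τ • Θ p, p)) :
    Function.Surjective Φ ∧
    (∀ (u : V) (p : Q),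
      α / 2 * ‖u‖ ^ 2 + τ / 2 * ‖p‖ ^ 2 ≤
        (A (u, p)).1 (Φ (u, p)).1 + (A (u, p)).2 (Φ (u, p)).2) ∧
    -- in particular, A is linearly mapped coercive
    (∃ Φ' : V × Q →L[ℝ] V × Q, Function.Surjective Φ' ∧
      ∀ M : ℝ, ∃ R : ℝ, ∀ x : V × Q, R ≤ Real.sqrt (‖x.1‖ ^ 2 + ‖x.2‖ ^ 2) →
        M * Real.sqrt (‖x.1‖ ^ 2 + ‖x.2‖ ^ 2) ≤ (A x).1 (Φ' x).1 + (A x).2 (Φ' x).2) := by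
  have hden : 0 < cΘ ^ 2 * cL ^ 2 := by
    rcases (mul_nonneg (sq_nonneg cΘ) (sq_nonneg cL)).lt_or_eq with h | h
    · exact h
    · rw [← h, div_zero] at hτ; linarith
  have hτ' : τ * (cΘ ^ 2 * cL ^ 2) ≤ α := (le_div_iff₀ hden).mp hτ
  have hsurj : Function.Surjective Φ := by
    rintro ⟨v, p⟩
    exact ⟨(v + τ • Θ p, p), by rw [hΦ]; simp⟩
  have key : ∀ (u : V) (p : Q),
      α / 2 * ‖u‖ ^ 2 + τ / 2 * ‖p‖ ^ 2 ≤
        (A (u, p)).1 (Φ (u, p)).1 + (A (u, p)).2 (Φ (u, p)).2 := by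
    intro u p
    have h1 : (A (u, p)).1 (Φ (u, p)).1
        = L u u - τ * L u (Θ p) - (B u p - τ * B (Θ p) p) := by
      rw [hΦ, hA1]
      simp [map_sub, map_smul, smul_eq_mul]
    have h2 : (A (u, p)).2 (Φ (u, p)).2 = B u p := by rw [hΦ, hA2]
    rw [h1, h2]
    have hb : L u (Θ p) ≤ cL * ‖u‖ * (cΘ * ‖p‖) := by
      calc L u (Θ p) ≤ ‖L u (Θ p)‖ := by rw [Real.norm_eq_abs]; exact le_abs_self _
        _ ≤ ‖L u‖ * ‖Θ p‖ := (L u).le_opNorm (Θ p)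
        _ ≤ cL * ‖u‖ * (cΘ * ‖p‖) :=
          mul_le_mul (hcL u) (hcΘ p) (norm_nonneg _) ((norm_nonneg _).trans (hcL u))
    have hab : τ * (cL * ‖u‖ * (cΘ * ‖p‖)) ≤ α / 2 * ‖u‖ ^ 2 + τ / 2 * ‖p‖ ^ 2 := by
      nlinarith [sq_nonneg (α * ‖u‖ - τ * cL * cΘ * ‖p‖),
        mul_le_mul_of_nonneg_left hτ' (mul_nonneg hτ0.le (sq_nonneg ‖p‖)), hα, hτ0]
    linarith [hL u, hab, mul_le_mul_of_nonneg_left (hΘ p) hτ0.le,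
      mul_le_mul_of_nonneg_left hb hτ0.le]
  refine ⟨hsurj, key, Φ, hsurj, ?_⟩
  intro M
  set c := min (α / 2) (τ / 2) with hc
  have hcpos : 0 < c := lt_min (by linarith) (by linarith)
  refine ⟨|M| / c, ?_⟩
  rintro ⟨u, p⟩ hR
  simp only at hR ⊢
  set s := Real.sqrt (‖u‖ ^ 2 + ‖p‖ ^ 2) with hs
  have hs0 : 0 ≤ s := Real.sqrt_nonneg _
  have hs2 : s ^ 2 = ‖u‖ ^ 2 + ‖p‖ ^ 2 := Real.sq_sqrt (by positivity)
  have hMs : M * s ≤ c * s ^ 2 := by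
    rw [div_le_iff₀ hcpos] at hR
    calc M * s ≤ |M| * s := mul_le_mul_of_nonneg_right (le_abs_self M) hs0
      _ ≤ (s * c) * s := mul_le_mul_of_nonneg_right hR hs0
      _ = c * s ^ 2 := by ring
  calc M * s ≤ c * s ^ 2 := hMs
    _ ≤ α / 2 * ‖u‖ ^ 2 + τ / 2 * ‖p‖ ^ 2 := by
        rw [hs2]
        have h1 := min_le_left (α / 2) (τ / 2)
        have h2 := min_le_right (α / 2) (τ / 2)
        nlinarith [sq_nonneg ‖u‖, sq_nonneg ‖p‖]
    _ ≤ _ := key u p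
end

section
/- Let V and Q be real Hilbert spaces, X := V × Q, let L ∈ L(V,V') and B ∈ L(V,Q') satisfy (A1) with constants α > 0 and c_L, let T ∈ L(Q,Q') satisfy (A2a), and assume (A2b) holds with Θ ∈ L(Q,V), constants c_T ≥ 0 and c_Θ. Let A_T : X → X' be the stabilized saddle-point operator A_T(u,p) := (Lu − B*p, Bu + Tp). Then for every τ > 0 with τ·c_T ≤ 1 and τ ≤ α/(2 c_Θ² c_L²), the map Φ(u,p) := (u − τ Θp, p) is a surjective continuous linear map X → X and ⟨A_T(u,p), Φ(u,p)⟩ ≥ (α/2)‖u‖_V² + (τ/4)‖p‖_Q² for all (u,p) ∈ X; in particular, A_T is linearly mapped coercive. -/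
open NormedSpace

/-- Linearly mapped coercivity of the stabilized saddle-point operator
`A_T(u,p) = (Lu − B*p, Bu + Tp)` under (A1), (A2a), (A2b), via `Φ(u,p) = (u − τΘp, p)`. -/
theorem stabilized_saddle_point_linearly_mapped_coercive
    {V Q : Type*}
    [NormedAddCommGroup V] [InnerProductSpace ℝ V] [CompleteSpace V]
    [NormedAddCommGroup Q] [InnerProductSpace ℝ Q] [CompleteSpace Q]
    -- (A1): L is coercive with constant α and bounded with constant c_L
    (L : V →L[ℝ] StrongDual ℝ V) (α : ℝ) (hα : 0 < α)
    (hL : ∀ u : V, α * ‖u‖ ^ 2 ≤ L u u)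
    (cL : ℝ) (hcL : ∀ u : V, ‖L u‖ ≤ cL * ‖u‖)
    (B : V →L[ℝ] StrongDual ℝ Q)
    -- (A2a): T is positive semi-definite
    (T : Q →L[ℝ] StrongDual ℝ Q) (hT : ∀ p : Q, 0 ≤ T p p)
    -- (A2b): ⟨B*p, Θp⟩ ≥ (1/2)‖p‖² − c_T ⟨Tp, p⟩, with continuity constant c_Θ for Θ
    (Θ : Q →L[ℝ] V) (cT : ℝ) (hcT : 0 ≤ cT)
    (hΘ : ∀ p : Q, 1 / 2 * ‖p‖ ^ 2 - cT * T p p ≤ B (Θ p) p)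
    (cΘ : ℝ) (hcΘ : ∀ p : Q, ‖Θ p‖ ≤ cΘ * ‖p‖)
    -- the stabilized saddle-point operator A_T(u,p) = (Lu − B*p, Bu + Tp)
    (A : V × Q → StrongDual ℝ V × StrongDual ℝ Q)
    (hA1 : ∀ (u : V) (p : Q) (v : V), (A (u, p)).1 v = L u v - B v p)
    (hA2 : ∀ (u : V) (p : Q), (A (u, p)).2 = B u + T p)
    (τ : ℝ) (hτ0 : 0 < τ) (hτ1 : τ * cT ≤ 1) (hτ2 : τ ≤ α / (2 * cΘ ^ 2 * cL ^ 2))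
    -- Φ is the continuous linear map Φ(u,p) = (u − τΘp, p)
    (Φ : V × Q →L[ℝ] V × Q)
    (hΦ : ∀ (u : V) (p : Q), Φ (u, p) = (u - τ • Θ p, p)) :
    Function.Surjective Φ ∧
    (∀ (u : V) (p : Q),
      α / 2 * ‖u‖ ^ 2 + τ / 4 * ‖p‖ ^ 2 ≤
        (A (u, p)).1 (Φ (u, p)).1 + (A (u, p)).2 (Φ (u, p)).2) ∧
    -- in particular, A_T is linearly mapped coercive
    (∃ Φ' : V × Q →L[ℝ] V × Q, Function.Surjective Φ' ∧
      ∀ M : ℝ, ∃ R : ℝ, ∀ x : V × Q, R ≤ Real.sqrt (‖x.1‖ ^ 2 + ‖x.2‖ ^ 2) →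
        M * Real.sqrt (‖x.1‖ ^ 2 + ‖x.2‖ ^ 2) ≤ (A x).1 (Φ' x).1 + (A x).2 (Φ' x).2) := by
  have hk : τ * (cL * cΘ) ^ 2 ≤ α / 2 := by
    rcases eq_or_lt_of_le (mul_nonneg (sq_nonneg cΘ) (sq_nonneg cL)) with h | h
    · nlinarith [hα]
    · have h2 : (0:ℝ) < 2 * cΘ ^ 2 * cL ^ 2 := by nlinarith
      have := (le_div_iff₀ h2).mp hτ2
      nlinarith
  have key : ∀ (u : V) (p : Q),
      α / 2 * ‖u‖ ^ 2 + τ / 4 * ‖p‖ ^ 2 ≤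
        (A (u, p)).1 (Φ (u, p)).1 + (A (u, p)).2 (Φ (u, p)).2 := by
    intro u p
    rw [hΦ]
    have e1 : (A (u, p)).1 (u - τ • Θ p)
        = L u u - τ * (L u (Θ p)) - (B u p - τ * (B (Θ p) p)) := by
      rw [hA1]
      simp [map_sub, map_smul, smul_eq_mul]
    have e2 : (A (u, p)).2 p = B u p + T p p := by
      rw [hA2]; simp
    simp only [e1, e2]
    have hb : L u (Θ p) ≤ cL * ‖u‖ * (cΘ * ‖p‖) := by
      have h1 : L u (Θ p) ≤ ‖L u (Θ p)‖ := le_abs_self _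
      have h2 : ‖L u (Θ p)‖ ≤ ‖L u‖ * ‖Θ p‖ := (L u).le_opNorm _
      have h3 : ‖L u‖ * ‖Θ p‖ ≤ cL * ‖u‖ * (cΘ * ‖p‖) :=
        mul_le_mul (hcL u) (hcΘ p) (norm_nonneg _)
          (le_trans (norm_nonneg _) (hcL u))
      linarith
    nlinarith [hL u, hT p, hΘ p,
      mul_le_mul_of_nonneg_left hb hτ0.le,
      mul_le_mul_of_nonneg_left (hΘ p) hτ0.le,
      mul_nonneg (by linarith : (0:ℝ) ≤ 1 - τ * cT) (hT p),
      sq_nonneg (α * ‖u‖ - τ * (cL * cΘ) * ‖p‖),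
      mul_nonneg (mul_nonneg hτ0.le
        (by linarith : (0:ℝ) ≤ α / 2 - τ * (cL * cΘ) ^ 2)) (sq_nonneg ‖p‖),
      hα, hτ0, sq_nonneg ‖u‖, sq_nonneg ‖p‖]
  have hsurj : Function.Surjective Φ := by
    rintro ⟨u, p⟩
    exact ⟨(u + τ • Θ p, p), by rw [hΦ]; simp⟩
  refine ⟨hsurj, key, Φ, hsurj, fun M => ?_⟩
  set c : ℝ := min (α / 2) (τ / 4) with hc
  have hc0 : 0 < c := lt_min (by linarith) (by linarith)
  refine ⟨M / c, fun x hx => ?_⟩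
  obtain ⟨u, p⟩ := x
  simp only at hx ⊢
  set s : ℝ := Real.sqrt (‖u‖ ^ 2 + ‖p‖ ^ 2) with hs
  have hs0 : 0 ≤ s := Real.sqrt_nonneg _
  have hs2 : s ^ 2 = ‖u‖ ^ 2 + ‖p‖ ^ 2 :=
    Real.sq_sqrt (by positivity)
  have hM : M ≤ c * s := by
    have := (div_le_iff₀ hc0).mp hx
    linarith
  have h1 : M * s ≤ c * s ^ 2 := by nlinarith
  have h2 : c * s ^ 2 ≤ α / 2 * ‖u‖ ^ 2 + τ / 4 * ‖p‖ ^ 2 := by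
    rw [hs2]
    have h3 : c ≤ α / 2 := min_le_left _ _
    have h4 : c ≤ τ / 4 := min_le_right _ _
    nlinarith [sq_nonneg ‖u‖, sq_nonneg ‖p‖]
  exact le_trans h1 (le_trans h2 (key u p))
end

section
/- Let V and Q be real Hilbert spaces, B ∈ L(V,Q'), and let V_h ⊆ V and Q_h ⊆ Q be closed subspaces. Assume there exists Θ ∈ L(Q,V) with ⟨B*p, Θp⟩ ≥ ‖p‖_Q² for all p ∈ Q, and a constant c_Θ with ‖Θp‖_V ≤ c_Θ‖p‖_Q. Let T ∈ L(Q,Q') satisfy ⟨Tp, p⟩ ≥ 0 for all p ∈ Q_h, let Π_h : V → V a continuous linear projection with range V_h, and assume there is c_I ≥ 0 such that ⟨B*p, Π_h u − u⟩ ≤ c_I · ⟨Tp, p⟩^{1/2} · ‖u‖_V for all u ∈ V and p ∈ Q_h. Then the map Θ_h := Π_h ∘ Θ restricted to Q_h is a continuous linear map from Q_h to V_h, and there exists c_T ≥ 0 (one may take c_T = c_I² c_Θ² / 2) such that ⟨B*p, Θ_h p⟩ ≥ (1/2)‖p‖_Q² − c_T ⟨Tp, p⟩ for all p ∈ Q_h.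 -/
open NormedSpace

/-- If (A2) holds on the continuous level and the interpolation-type
estimate `⟨B*p, Π_h u − u⟩ ≤ c_I ⟨Tp,p⟩^{1/2} ‖u‖` holds, then `Θ_h := Π_h ∘ Θ` maps
`Q_h` into `V_h` and satisfies (A2b) with `c_T = c_I² c_Θ² / 2`. -/
theorem discrete_A2b_from_interpolation
    {V Q : Type*}
    [NormedAddCommGroup V] [InnerProductSpace ℝ V] [CompleteSpace V]
    [NormedAddCommGroup Q] [InnerProductSpace ℝ Q] [CompleteSpace Q]
    (B : V →L[ℝ] StrongDual ℝ Q)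
    -- closed subspaces V_h ⊆ V and Q_h ⊆ Q
    (Vh : Submodule ℝ V) (Qh : Submodule ℝ Q)
    (hVh : IsClosed (Vh : Set V)) (hQh : IsClosed (Qh : Set Q))
    -- (A2): ⟨B*p, Θp⟩ ≥ ‖p‖², with continuity constant c_Θ
    (Θ : Q →L[ℝ] V) (hΘ : ∀ p : Q, ‖p‖ ^ 2 ≤ B (Θ p) p)
    (cΘ : ℝ) (hcΘ : ∀ p : Q, ‖Θ p‖ ≤ cΘ * ‖p‖)
    -- T with ⟨Tp, p⟩ ≥ 0 on Q_h
    (T : Q →L[ℝ] StrongDual ℝ Q) (hT : ∀ p ∈ Qh, 0 ≤ T p p)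
    -- Π_h : continuous linear projection with range V_h
    (Ph : V →L[ℝ] V) (hPrange : LinearMap.range (Ph : V →ₗ[ℝ] V) = Vh) (hPproj : ∀ v ∈ Vh, Ph v = v)
    -- interpolation estimate: ⟨B*p, Π_h u − u⟩ ≤ c_I ⟨Tp,p⟩^{1/2} ‖u‖
    (cI : ℝ) (hcI : 0 ≤ cI)
    (hinterp : ∀ u : V, ∀ p ∈ Qh, B (Ph u - u) p ≤ cI * Real.sqrt (T p p) * ‖u‖) :
    (∀ p ∈ Qh, Ph (Θ p) ∈ Vh) ∧
    ∀ p ∈ Qh, 1 / 2 * ‖p‖ ^ 2 - cI ^ 2 * cΘ ^ 2 / 2 * T p p ≤ B (Ph (Θ p)) p := by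
  constructor
  · intro p _
    rw [← hPrange]
    exact ⟨Θ p, rfl⟩
  · intro p hp
    set u := Θ p with hu
    have h1 : -(cI * Real.sqrt (T p p) * ‖u‖) ≤ B (Ph u - u) p := by
      have := hinterp (-u) p hp
      have heq : B (Ph (-u) - -u) p = -(B (Ph u - u) p) := by
        simp [map_neg]; ring
      rw [heq, norm_neg] at this
      linarith
    have h2 : B (Ph u) p = B u p + B (Ph u - u) p := by
      have : B (Ph u - u) p = B (Ph u) p - B u p := by
        simp [map_sub]
      linarith
    have hTnn := hT p hp
    have hsq : Real.sqrt (T p p) ^ 2 = T p p := Real.sq_sqrt hTnn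
    have hsnn : 0 ≤ Real.sqrt (T p p) := Real.sqrt_nonneg _
    have hun : 0 ≤ ‖u‖ := norm_nonneg _
    have hbound : cI * Real.sqrt (T p p) * ‖u‖ ≤ cI * Real.sqrt (T p p) * (cΘ * ‖p‖) := by
      apply mul_le_mul_of_nonneg_left (hcΘ p) (by positivity)
    have hamgm : cI * Real.sqrt (T p p) * (cΘ * ‖p‖) ≤
        cI ^ 2 * cΘ ^ 2 / 2 * Real.sqrt (T p p) ^ 2 + 1 / 2 * ‖p‖ ^ 2 := by
      nlinarith [sq_nonneg (cI * cΘ * Real.sqrt (T p p) - ‖p‖)]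
    rw [hsq] at hamgm
    have hB := hΘ p
    linarith
end

section
/- Let V and Q be real Hilbert spaces, X := V × Q, let L ∈ L(V,V') and B ∈ L(V,Q') satisfy (A1) with constants α > 0 and c_L, let T ∈ L(Q,Q') satisfy (A2a), assume (A2b) holds with Θ ∈ L(Q,V), constants c_T ≥ 0 and c_Θ, and let C : V → V' satisfy (A3) and the linear growth bound ‖C(u)‖_{V'} ≤ c_N ‖u‖_V for all u ∈ V and some c_N ≥ 0. Define A : X → X' by A(u,p) := (C(u) + Lu − B*p, Bu + Tp). Then there exist a surjective continuous linear map Φ : X → X of the form Φ(u,p) = (u − τ Θp, p) for some τ > 0, and β > 0, such that ⟨A(x), Φ(x)⟩ ≥ β ‖x‖_X² for all x ∈ X; in particular, A is linearly mapped coercive. -/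
open NormedSpace

/-- Linearly mapped coercivity of the nonlinear saddle-point operator
`A(u,p) = (C(u) + Lu − B*p, Bu + Tp)` with a nonlinearity of at most linear growth. -/
theorem moderate_nonlinearity_linearly_mapped_coercive
    {V Q : Type*}
    [NormedAddCommGroup V] [InnerProductSpace ℝ V] [CompleteSpace V]
    [NormedAddCommGroup Q] [InnerProductSpace ℝ Q] [CompleteSpace Q]
    -- (A1): L is coercive with constant α and bounded with constant c_L
    (L : V →L[ℝ] StrongDual ℝ V) (α : ℝ) (hα : 0 < α)
    (hL : ∀ u : V, α * ‖u‖ ^ 2 ≤ L u u)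
    (cL : ℝ) (hcL : ∀ u : V, ‖L u‖ ≤ cL * ‖u‖)
    (B : V →L[ℝ] StrongDual ℝ Q)
    -- (A2a): T is positive semi-definite
    (T : Q →L[ℝ] StrongDual ℝ Q) (hT : ∀ p : Q, 0 ≤ T p p)
    -- (A2b): ⟨B*p, Θp⟩ ≥ (1/2)‖p‖² − c_T ⟨Tp, p⟩, with continuity constant c_Θ for Θ
    (Θ : Q →L[ℝ] V) (cT : ℝ) (hcT : 0 ≤ cT)
    (hΘ : ∀ p : Q, 1 / 2 * ‖p‖ ^ 2 - cT * T p p ≤ B (Θ p) p)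
    (cΘ : ℝ) (hcΘ : ∀ p : Q, ‖Θ p‖ ≤ cΘ * ‖p‖)
    -- (A3) and the linear growth bound for the nonlinearity C
    (C : V → StrongDual ℝ V) (hC0 : ∀ u : V, 0 ≤ C u u)
    (cN : ℝ) (hcN : 0 ≤ cN) (hCgrowth : ∀ u : V, ‖C u‖ ≤ cN * ‖u‖)
    -- the nonlinear saddle-point operator A(u,p) = (C(u) + Lu − B*p, Bu + Tp)
    (A : V × Q → StrongDual ℝ V × StrongDual ℝ Q)
    (hA1 : ∀ (u : V) (p : Q) (v : V), (A (u, p)).1 v = C u v + L u v - B v p)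
    (hA2 : ∀ (u : V) (p : Q), (A (u, p)).2 = B u + T p) :
    ∃ τ : ℝ, 0 < τ ∧ ∃ β : ℝ, 0 < β ∧ ∃ Φ : V × Q →L[ℝ] V × Q,
      (∀ (u : V) (p : Q), Φ (u, p) = (u - τ • Θ p, p)) ∧
      Function.Surjective Φ ∧
      ∀ x : V × Q,
        β * (‖x.1‖ ^ 2 + ‖x.2‖ ^ 2) ≤ (A x).1 (Φ x).1 + (A x).2 (Φ x).2 := by
  classical
  set cL' : ℝ := max cL 0 with hcL'def
  set cΘ' : ℝ := max cΘ 0 with hcΘ'def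
  have hcL'0 : (0:ℝ) ≤ cL' := le_max_right _ _
  have hcΘ'0 : (0:ℝ) ≤ cΘ' := le_max_right _ _
  set M : ℝ := (cN + cL') * cΘ' with hMdef
  have hM0 : 0 ≤ M := mul_nonneg (by linarith) hcΘ'0
  set τ : ℝ := min (1/(cT+1)) (α/(2*(M^2+1))) with hτdef
  have hτ0 : 0 < τ := lt_min (by positivity) (by positivity)
  have hτcT : τ * cT ≤ 1 := by
    have h1 : τ ≤ 1/(cT+1) := min_le_left _ _
    have h2 : (0:ℝ) < cT + 1 := by linarith
    calc τ * cT ≤ (1/(cT+1)) * cT := mul_le_mul_of_nonneg_right h1 hcT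
      _ ≤ 1 := by rw [div_mul_eq_mul_div, div_le_one h2]; linarith
  have hτM : τ * M^2 ≤ α/2 := by
    have h1 : τ ≤ α/(2*(M^2+1)) := min_le_right _ _
    have h2 : (0:ℝ) < M^2+1 := by positivity
    calc τ * M^2 ≤ (α/(2*(M^2+1))) * M^2 := mul_le_mul_of_nonneg_right h1 (sq_nonneg M)
      _ ≤ α/2 := by
          rw [div_mul_eq_mul_div, div_le_div_iff₀ (by positivity) (by norm_num)]
          nlinarith [sq_nonneg M]
  refine ⟨τ, hτ0, min (α/2) (τ/4), lt_min (by positivity) (by positivity), ?_⟩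
  set Φ : V × Q →L[ℝ] V × Q :=
    (ContinuousLinearMap.fst ℝ V Q - τ • Θ.comp (ContinuousLinearMap.snd ℝ V Q)).prod
      (ContinuousLinearMap.snd ℝ V Q) with hΦdef
  have hΦapp : ∀ (u : V) (p : Q), Φ (u, p) = (u - τ • Θ p, p) := by
    intro u p; rfl
  refine ⟨Φ, hΦapp, ?_, ?_⟩
  · rintro ⟨v, q⟩
    refine ⟨(v + τ • Θ q, q), ?_⟩
    rw [hΦapp]
    simp
  · rintro ⟨u, p⟩
    simp only [hΦapp]
    have hexp : (A (u, p)).1 (u - τ • Θ p) + (A (u, p)).2 p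
        = C u u - τ * C u (Θ p) + (L u u - τ * L u (Θ p))
          + τ * B (Θ p) p + T p p := by
      rw [hA1, hA2]
      simp only [map_sub, map_smul, ContinuousLinearMap.sub_apply,
        ContinuousLinearMap.add_apply, ContinuousLinearMap.smul_apply, smul_eq_mul]
      ring
    simp only [hexp]
    -- bounds
    have hΘn : ‖Θ p‖ ≤ cΘ' * ‖p‖ :=
      (hcΘ p).trans (mul_le_mul_of_nonneg_right (le_max_left _ _) (norm_nonneg p))
    have hLn : ‖L u‖ ≤ cL' * ‖u‖ :=
      (hcL u).trans (mul_le_mul_of_nonneg_right (le_max_left _ _) (norm_nonneg u))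
    have hCu : |(C u) (Θ p)| ≤ cN * ‖u‖ * (cΘ' * ‖p‖) := by
      calc |(C u) (Θ p)| ≤ ‖C u‖ * ‖Θ p‖ := by
            simpa [Real.norm_eq_abs] using (C u).le_opNorm (Θ p)
        _ ≤ cN * ‖u‖ * (cΘ' * ‖p‖) :=
            mul_le_mul (hCgrowth u) hΘn (norm_nonneg _)
              (mul_nonneg hcN (norm_nonneg u))
    have hLu : |(L u) (Θ p)| ≤ cL' * ‖u‖ * (cΘ' * ‖p‖) := by
      calc |(L u) (Θ p)| ≤ ‖L u‖ * ‖Θ p‖ := by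
            simpa [Real.norm_eq_abs] using (L u).le_opNorm (Θ p)
        _ ≤ cL' * ‖u‖ * (cΘ' * ‖p‖) :=
            mul_le_mul hLn hΘn (norm_nonneg _)
              (mul_nonneg hcL'0 (norm_nonneg u))
    have e1 : τ * C u (Θ p) ≤ τ * (cN * ‖u‖ * (cΘ' * ‖p‖)) :=
      mul_le_mul_of_nonneg_left (le_of_abs_le hCu) hτ0.le
    have e2 : τ * L u (Θ p) ≤ τ * (cL' * ‖u‖ * (cΘ' * ‖p‖)) :=
      mul_le_mul_of_nonneg_left (le_of_abs_le hLu) hτ0.le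
    have e3 : τ * (1 / 2 * ‖p‖ ^ 2 - cT * T p p) ≤ τ * B (Θ p) p :=
      mul_le_mul_of_nonneg_left (hΘ p) hτ0.le
    have e6 : 0 ≤ (1 - τ * cT) * T p p := mul_nonneg (by linarith) (hT p)
    have e5 : τ * M^2 * (τ * ‖p‖^2) ≤ α/2 * (τ * ‖p‖^2) :=
      mul_le_mul_of_nonneg_right hτM (mul_nonneg hτ0.le (sq_nonneg _))
    have key : τ * M * (‖u‖ * ‖p‖) ≤ α/2 * ‖u‖^2 + τ/4 * ‖p‖^2 := by
      nlinarith [sq_nonneg (α * ‖u‖ - τ * M * ‖p‖), e5, hα, mul_pos hα hα]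
    have f1 : min (α/2) (τ/4) * ‖u‖^2 ≤ α/2 * ‖u‖^2 :=
      mul_le_mul_of_nonneg_right (min_le_left _ _) (sq_nonneg _)
    have f2 : min (α/2) (τ/4) * ‖p‖^2 ≤ τ/4 * ‖p‖^2 :=
      mul_le_mul_of_nonneg_right (min_le_right _ _) (sq_nonneg _)
    rw [hMdef] at key
    have h0 := hC0 u
    have hLuu := hL u
    have hTp := hT p
    linarith [key, e1, e2, e3, e6, f1, f2, h0, hLuu, hTp]
end

section
/- Let V and Q be real Hilbert spaces, X := V × Q, and let ψ_V : V → V' and ψ_Q : Q → Q' be the Riesz isomorphisms. Let Θ ∈ L(Q,V), let c_Θ > 0 be a constant with ‖Θp‖_V ≤ c_Θ‖p‖_Q for all p, and let τ : V → ℝ be a continuous function with 0 < τ(u) ≤ 1/(2 c_Θ) for all u ∈ V. Define Ψ : X → X' by Ψ(u,p) := (ψ_V(u − τ(u) Θp), ψ_Q p) and S : X' → X by S := ψ_V⁻¹ × ψ_Q⁻¹. Then: (i) S is a surjective continuous linear map; (ii) (S ∘ Ψ)(u,p) = (u − τ(u) Θp, p) for all (u,p) ∈ X; (iii) there is a constant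 C with ‖Ψ(x)‖_{X'} ≤ C‖x‖_X for all x ∈ X; (iv) ⟨Ψ(x), x⟩ ≥ (1/4)‖x‖_X² for all x ∈ X. -/
open NormedSpace

/-- The nonlinear map `Ψ(u,p) = (ψ_V(u − τ(u)Θp), ψ_Q p)` together with
`S = ψ_V⁻¹ × ψ_Q⁻¹` satisfies: S is a surjective continuous linear map,
`(S ∘ Ψ)(u,p) = (u − τ(u)Θp, p)`, Ψ is bounded, and `⟨Ψ(x), x⟩ ≥ (1/4)‖x‖²`. -/
theorem nonlinear_psi_properties
    {V Q : Type*}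
    [NormedAddCommGroup V] [InnerProductSpace ℝ V] [CompleteSpace V]
    [NormedAddCommGroup Q] [InnerProductSpace ℝ Q] [CompleteSpace Q]
    (Θ : Q →L[ℝ] V) (cΘ : ℝ) (hcΘ0 : 0 < cΘ)
    (hcΘ : ∀ p : Q, ‖Θ p‖ ≤ cΘ * ‖p‖)
    (τ : V → ℝ) (hτcont : Continuous τ)
    (hτpos : ∀ u : V, 0 < τ u) (hτle : ∀ u : V, τ u ≤ 1 / (2 * cΘ))
    -- Ψ(u,p) := (ψ_V(u − τ(u)Θp), ψ_Q p)
    (Ψ : V × Q → StrongDual ℝ V × StrongDual ℝ Q)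
    (hΨ : ∀ (u : V) (p : Q),
      Ψ (u, p) = (InnerProductSpace.toDual ℝ V (u - τ u • Θ p),
                  InnerProductSpace.toDual ℝ Q p))
    -- S := ψ_V⁻¹ × ψ_Q⁻¹
    (S : StrongDual ℝ V × StrongDual ℝ Q →L[ℝ] V × Q)
    (hS : ∀ (f : StrongDual ℝ V) (g : StrongDual ℝ Q),
      S (f, g) = ((InnerProductSpace.toDual ℝ V).symm f,
                  (InnerProductSpace.toDual ℝ Q).symm g)) :
    -- (i) S is a surjective continuous linear map
    Function.Surjective S ∧
    -- (ii) (S ∘ Ψ)(u,p) = (u − τ(u)Θp, p)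
    (∀ (u : V) (p : Q), S (Ψ (u, p)) = (u - τ u • Θ p, p)) ∧
    -- (iii) ‖Ψ(x)‖_{X'} ≤ C ‖x‖_X
    (∃ c : ℝ, ∀ (u : V) (p : Q),
      Real.sqrt (‖(Ψ (u, p)).1‖ ^ 2 + ‖(Ψ (u, p)).2‖ ^ 2) ≤
        c * Real.sqrt (‖u‖ ^ 2 + ‖p‖ ^ 2)) ∧
    -- (iv) ⟨Ψ(x), x⟩ ≥ (1/4) ‖x‖_X²
    (∀ (u : V) (p : Q),
      1 / 4 * (‖u‖ ^ 2 + ‖p‖ ^ 2) ≤ (Ψ (u, p)).1 u + (Ψ (u, p)).2 p) := by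

  have key : ∀ (u : V) (p : Q), τ u * ‖Θ p‖ ≤ ‖p‖ / 2 := by
    intro u p
    have h1 : τ u * ‖Θ p‖ ≤ (1 / (2 * cΘ)) * (cΘ * ‖p‖) := by
      apply mul_le_mul (hτle u) (hcΘ p) (norm_nonneg _)
      positivity
    calc τ u * ‖Θ p‖ ≤ (1 / (2 * cΘ)) * (cΘ * ‖p‖) := h1
      _ = ‖p‖ / 2 := by field_simp
  refine ⟨?_, ?_, ?_, ?_⟩
  · intro ⟨u, p⟩
    exact ⟨(InnerProductSpace.toDual ℝ V u, InnerProductSpace.toDual ℝ Q p), by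
      rw [hS]; simp⟩
  · intro u p
    rw [hΨ, hS]; simp
  · refine ⟨2, fun u p => ?_⟩
    rw [hΨ]
    simp only
    rw [(InnerProductSpace.toDual ℝ V).norm_map, (InnerProductSpace.toDual ℝ Q).norm_map]
    have h1 : ‖u - τ u • Θ p‖ ≤ ‖u‖ + ‖p‖ / 2 := by
      calc ‖u - τ u • Θ p‖ ≤ ‖u‖ + ‖τ u • Θ p‖ := norm_sub_le _ _
        _ = ‖u‖ + |τ u| * ‖Θ p‖ := by rw [norm_smul]; rfl
        _ = ‖u‖ + τ u * ‖Θ p‖ := by rw [abs_of_pos (hτpos u)]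
        _ ≤ ‖u‖ + ‖p‖ / 2 := by linarith [key u p]
    have h2 : ‖u - τ u • Θ p‖ ^ 2 + ‖p‖ ^ 2 ≤ 4 * (‖u‖ ^ 2 + ‖p‖ ^ 2) := by
      have h3 : ‖u - τ u • Θ p‖ ^ 2 ≤ (‖u‖ + ‖p‖ / 2) ^ 2 :=
        pow_le_pow_left₀ (norm_nonneg _) h1 2
      nlinarith [norm_nonneg u, norm_nonneg p, sq_nonneg (‖u‖ - ‖p‖)]
    calc Real.sqrt (‖u - τ u • Θ p‖ ^ 2 + ‖p‖ ^ 2)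
        ≤ Real.sqrt (4 * (‖u‖ ^ 2 + ‖p‖ ^ 2)) := Real.sqrt_le_sqrt h2
      _ = 2 * Real.sqrt (‖u‖ ^ 2 + ‖p‖ ^ 2) := by
          rw [Real.sqrt_mul (by norm_num : (0:ℝ) ≤ 4),
            show Real.sqrt 4 = 2 by
              rw [show (4:ℝ) = 2 ^ 2 by norm_num, Real.sqrt_sq (by norm_num : (0:ℝ) ≤ 2)]]
  · intro u p
    rw [hΨ]
    simp only [InnerProductSpace.toDual_apply_apply]
    have h1 : (inner ℝ (u - τ u • Θ p) u : ℝ) = ‖u‖ ^ 2 - τ u * inner ℝ (Θ p) u := by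
      rw [inner_sub_left, real_inner_smul_left, real_inner_self_eq_norm_sq]
    have h2 : (inner ℝ p p : ℝ) = ‖p‖ ^ 2 := real_inner_self_eq_norm_sq p
    have h3 : (inner ℝ (Θ p) u : ℝ) ≤ ‖Θ p‖ * ‖u‖ := real_inner_le_norm _ _
    have h4 : τ u * inner ℝ (Θ p) u ≤ ‖p‖ / 2 * ‖u‖ := by
      have := hτpos u
      have h5 : τ u * inner ℝ (Θ p) u ≤ τ u * (‖Θ p‖ * ‖u‖) :=
        mul_le_mul_of_nonneg_left h3 (le_of_lt this)
      have h6 : τ u * (‖Θ p‖ * ‖u‖) = (τ u * ‖Θ p‖) * ‖u‖ := by ring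
      have h7 : (τ u * ‖Θ p‖) * ‖u‖ ≤ ‖p‖ / 2 * ‖u‖ :=
        mul_le_mul_of_nonneg_right (key u p) (norm_nonneg _)
      linarith
    rw [h1, h2]
    nlinarith [sq_nonneg (‖u‖ - ‖p‖), norm_nonneg u, norm_nonneg p]
end

section
/- Let V and Q be real Hilbert spaces, X := V × Q, let L ∈ L(V,V') and B ∈ L(V,Q') satisfy (A1) with constants α > 0 and c_L, let T ∈ L(Q,Q') satisfy (A2a), assume (A2b) holds with Θ ∈ L(Q,V), constants c_T ≥ 0 and c_Θ > 0, and let C : V → V' satisfy (A3) and (A4) with constant c_N. Define A : X → X' by A(u,p) := (C(u) + Lu − B*p, Bu + Tp). Let (u,p) ∈ X and let τ > 0 satisfy τ·c_T ≤ 1 and τ ≤ (α/2)·c_Θ⁻²·(c_N‖u‖_V + c_L)⁻². Then ⟨A(u,p), (u − τ Θp, p)⟩ ≥ (α/2)‖u‖_V² + (τ/4)‖p‖_Q². -/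
open NormedSpace

private lemma young_aux (a t K U P : ℝ) (ha : 0 < a) (ht : 0 < t)
    (hK : t * K ^ 2 ≤ a / 2) : t * (K * (U * P)) ≤ a / 2 * U ^ 2 + t / 4 * P ^ 2 := by
  have key : 2 * a * (t * (K * (U * P))) ≤ 2 * a * (a / 2 * U ^ 2 + t / 4 * P ^ 2) := by
    nlinarith [sq_nonneg (a * U - t * K * P),
      mul_nonneg (mul_nonneg ht.le (sub_nonneg.mpr hK)) (sq_nonneg P)]
  exact (mul_le_mul_iff_right₀ (by linarith : (0:ℝ) < 2 * a)).mp key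

/-- The key pointwise lower bound
`⟨A(u,p), (u − τΘp, p)⟩ ≥ (α/2)‖u‖² + (τ/4)‖p‖²` for the nonlinear saddle-point operator
with quadratic nonlinearity, for `τ` small depending on `‖u‖`. -/
theorem quadratic_nonlinearity_pointwise_bound
    {V Q : Type*}
    [NormedAddCommGroup V] [InnerProductSpace ℝ V] [CompleteSpace V]
    [NormedAddCommGroup Q] [InnerProductSpace ℝ Q] [CompleteSpace Q]
    -- (A1): L is coercive with constant α and bounded with constant c_L
    (L : V →L[ℝ] StrongDual ℝ V) (α : ℝ) (hα : 0 < α)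
    (hL : ∀ u : V, α * ‖u‖ ^ 2 ≤ L u u)
    (cL : ℝ) (hcL : ∀ u : V, ‖L u‖ ≤ cL * ‖u‖)
    (B : V →L[ℝ] StrongDual ℝ Q)
    -- (A2a): T is positive semi-definite
    (T : Q →L[ℝ] StrongDual ℝ Q) (hT : ∀ p : Q, 0 ≤ T p p)
    -- (A2b): ⟨B*p, Θp⟩ ≥ (1/2)‖p‖² − c_T ⟨Tp, p⟩, with continuity constant c_Θ > 0 for Θ
    (Θ : Q →L[ℝ] V) (cT : ℝ) (hcT : 0 ≤ cT)
    (hΘ : ∀ p : Q, 1 / 2 * ‖p‖ ^ 2 - cT * T p p ≤ B (Θ p) p)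
    (cΘ : ℝ) (hcΘ0 : 0 < cΘ) (hcΘ : ∀ p : Q, ‖Θ p‖ ≤ cΘ * ‖p‖)
    -- (A3) and (A4): the nonlinearity C
    (C : V → StrongDual ℝ V) (hC0 : ∀ u : V, 0 ≤ C u u)
    (cN : ℝ) (hCgrowth : ∀ u : V, ‖C u‖ ≤ cN * ‖u‖ ^ 2)
    -- the nonlinear saddle-point operator A(u,p) = (C(u) + Lu − B*p, Bu + Tp)
    (A : V × Q → StrongDual ℝ V × StrongDual ℝ Q)
    (hA1 : ∀ (u : V) (p : Q) (v : V), (A (u, p)).1 v = C u v + L u v - B v p)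
    (hA2 : ∀ (u : V) (p : Q), (A (u, p)).2 = B u + T p)
    (u : V) (p : Q)
    (τ : ℝ) (hτ0 : 0 < τ) (hτ1 : τ * cT ≤ 1)
    (hτ2 : τ ≤ α / 2 * (cΘ ^ 2)⁻¹ * ((cN * ‖u‖ + cL) ^ 2)⁻¹) :
    α / 2 * ‖u‖ ^ 2 + τ / 4 * ‖p‖ ^ 2 ≤
      (A (u, p)).1 (u - τ • Θ p) + (A (u, p)).2 p := by
  set M : ℝ := cN * ‖u‖ + cL with hM
  clear_value M
  -- M^2 > 0
  have hM2 : 0 < M ^ 2 := by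
    rcases lt_or_eq_of_le (sq_nonneg M) with h | h
    · exact h
    · exfalso
      rw [← h, inv_zero, mul_zero] at hτ2
      linarith
  -- evaluate the pairing
  have h1 : (A (u, p)).1 (u - τ • Θ p)
      = C u u + L u u - B u p - τ * (C u (Θ p) + L u (Θ p) - B (Θ p) p) := by
    rw [map_sub, map_smul, hA1, hA1]
    simp [smul_eq_mul]
  have h2 : (A (u, p)).2 p = B u p + T p p := by
    rw [hA2]; simp
  rw [h1, h2]
  -- cross-term bound
  have hCub : ‖C u‖ ≤ cN * ‖u‖ ^ 2 := hCgrowth u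
  have hLub : ‖L u‖ ≤ cL * ‖u‖ := hcL u
  have hΘb : ‖Θ p‖ ≤ cΘ * ‖p‖ := hcΘ p
  have hΘnn : (0:ℝ) ≤ cΘ * ‖p‖ := le_trans (norm_nonneg _) hΘb
  have hcross : C u (Θ p) + L u (Θ p)
      ≤ (cN * ‖u‖ ^ 2) * (cΘ * ‖p‖) + (cL * ‖u‖) * (cΘ * ‖p‖) := by
    have hc1 : C u (Θ p) ≤ (cN * ‖u‖ ^ 2) * (cΘ * ‖p‖) := by
      calc C u (Θ p) ≤ ‖C u‖ * ‖Θ p‖ :=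
            le_trans (le_abs_self _) ((C u).le_opNorm (Θ p))
        _ ≤ (cN * ‖u‖ ^ 2) * (cΘ * ‖p‖) :=
            mul_le_mul hCub hΘb (norm_nonneg _) (le_trans (norm_nonneg _) hCub)
    have hc2 : L u (Θ p) ≤ (cL * ‖u‖) * (cΘ * ‖p‖) := by
      calc L u (Θ p) ≤ ‖L u‖ * ‖Θ p‖ :=
            le_trans (le_abs_self _) ((L u).le_opNorm (Θ p))
        _ ≤ (cL * ‖u‖) * (cΘ * ‖p‖) :=
            mul_le_mul hLub hΘb (norm_nonneg _) (le_trans (norm_nonneg _) hLub)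
    linarith
  have hcross' : τ * (C u (Θ p) + L u (Θ p)) ≤ τ * ((M * cΘ) * (‖u‖ * ‖p‖)) := by
    have : (cN * ‖u‖ ^ 2) * (cΘ * ‖p‖) + (cL * ‖u‖) * (cΘ * ‖p‖)
        = (M * cΘ) * (‖u‖ * ‖p‖) := by rw [hM]; ring
    rw [← this]
    exact mul_le_mul_of_nonneg_left hcross hτ0.le
  -- τ * K² ≤ α/2 where K = M * cΘ
  have hK2 : 0 < (M * cΘ) ^ 2 := by
    rw [mul_pow]; exact mul_pos hM2 (pow_pos hcΘ0 2)
  have hτK : τ * (M * cΘ) ^ 2 ≤ α / 2 := by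
    have h : α / 2 * (cΘ ^ 2)⁻¹ * (M ^ 2)⁻¹ = α / 2 / ((M * cΘ) ^ 2) := by
      rw [mul_pow]; field_simp
    rw [h] at hτ2
    exact (le_div_iff₀ hK2).mp hτ2
  -- Young's inequality
  have hyoung : τ * ((M * cΘ) * (‖u‖ * ‖p‖)) ≤ α / 2 * ‖u‖ ^ 2 + τ / 4 * ‖p‖ ^ 2 :=
    young_aux α τ (M * cΘ) ‖u‖ ‖p‖ hα hτ0 hτK
  -- remaining pieces
  have hLuu := hL u
  have hCuu := hC0 u
  have hTpp := hT p
  have hBθ : τ * (1 / 2 * ‖p‖ ^ 2 - cT * T p p) ≤ τ * B (Θ p) p :=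
    mul_le_mul_of_nonneg_left (hΘ p) hτ0.le
  have hTτ : 0 ≤ (1 - τ * cT) * T p p :=
    mul_nonneg (by linarith) hTpp
  linarith [hyoung, hcross', hLuu, hCuu, hBθ, hTτ, hTpp]
end
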